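/- arXiv:1107.3258 — 3 statements merged into one kernel-verified Lean document; each statement's English description precedes it below -/
import Mathlib

section
/- Let L : ℝ^p → ℝ satisfy restricted strong smoothness with parameter κ_u > 0 on the relevant sparse sets: L(θ̂ − θ̂_j e_j) ≤ L(θ̂) + (−θ̂_j)∇_j L(θ̂) + (κ_u/2) θ̂_j² for each j in the support Ŝ of θ̂. Suppose ∇_j L(θ̂) = 0 for all j ∈ Ŝ (θ̂ is a restricted minimizer), and suppose the backward step fails: min_{j ∈ Ŝ} L(θ̂ − θ̂_j e_j) − L(θ̂) > ε/2 for some ε > 0. Then for any subset T ⊆ Ŝ, Σ_{j ∈ T} θ̂_j² ≥ (ε/κ_u) |T|. -/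
open scoped Classical BigOperators

/-- Stopping Backward Step: if removing any single active coordinate of `θ̂`
increases the loss by more than `ε/2`, the loss is restricted strongly smooth with
parameter `κᵤ` along active coordinates, and `θ̂` is a restricted minimizer
(`∇ⱼL(θ̂) = 0` for `j ∈ Ŝ`), then every subset `T ⊆ Ŝ` satisfies
`Σ_{j ∈ T} θ̂ⱼ² ≥ (ε/κᵤ) |T|`. -/
theorem stopping_backward_step {p : ℕ}
    (L : EuclideanSpace ℝ (Fin p) → ℝ) (g : Fin p → ℝ)
    (θh : EuclideanSpace ℝ (Fin p)) (Shat : Finset (Fin p))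
    (κu ε : ℝ) (hκu : 0 < κu) (hε : 0 < ε)
    (hsmooth : ∀ j ∈ Shat,
      L (θh - θh j • EuclideanSpace.single j (1 : ℝ)) ≤
        L θh + (-(θh j)) * g j + (κu / 2) * (θh j) ^ 2)
    (hgrad : ∀ j ∈ Shat, g j = 0)
    (hback : ∀ j ∈ Shat,
      L (θh - θh j • EuclideanSpace.single j (1 : ℝ)) - L θh > ε / 2) :
    ∀ T ⊆ Shat, (ε / κu) * T.card ≤ ∑ j ∈ T, (θh j) ^ 2 := by
  intro T hT
  have key : ∀ j ∈ T, ε / κu ≤ (θh j) ^ 2 := by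
    intro j hj
    have hjS := hT hj
    have h1 := hsmooth j hjS
    have h2 := hback j hjS
    rw [hgrad j hjS] at h1
    have : ε / 2 < (κu / 2) * (θh j) ^ 2 := by nlinarith
    rw [div_le_iff₀ hκu]
    nlinarith
  calc (ε / κu) * T.card = ∑ _j ∈ T, ε / κu := by
        rw [Finset.sum_const, nsmul_eq_mul, mul_comm]
    _ ≤ ∑ j ∈ T, (θh j) ^ 2 := Finset.sum_le_sum key
end

section
/- Let G : ℝ^p → ℝ be continuous with G(0) = 0, G(tΔ) ≤ t G(Δ) for all t ∈ [0,1], and suppose G(Δ) > 0 for every Δ with ‖Δ‖₂ = r (where r > 0). If Δ̂ ∈ ℝ^p satisfies G(Δ̂) ≤ 0, then ‖Δ̂‖₂ < r (in particular ‖Δ̂‖₂ ≤ r). -/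
/-- Fixed-point lemma: if `G` is continuous, `G(0) = 0`, `G` is sub-homogeneous
(`G(tΔ) ≤ t G(Δ)` for `t ∈ [0,1]`), and `G > 0` on the sphere of radius `r > 0`,
then any `Δ̂` with `G(Δ̂) ≤ 0` satisfies `‖Δ̂‖₂ < r` (in particular `‖Δ̂‖₂ ≤ r`). -/
theorem fixed_point_error_bound {p : ℕ}
    (G : EuclideanSpace ℝ (Fin p) → ℝ) (hcont : Continuous G)
    (h0 : G 0 = 0)
    (hsub : ∀ (Δ : EuclideanSpace ℝ (Fin p)), ∀ t ∈ Set.Icc (0 : ℝ) 1,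
      G (t • Δ) ≤ t * G Δ)
    (r : ℝ) (hr : 0 < r)
    (hpos : ∀ Δ : EuclideanSpace ℝ (Fin p), ‖Δ‖ = r → 0 < G Δ)
    (Δhat : EuclideanSpace ℝ (Fin p)) (hΔ : G Δhat ≤ 0) :
    ‖Δhat‖ < r ∧ ‖Δhat‖ ≤ r := by
  have hlt : ‖Δhat‖ < r := by
    by_contra h
    push_neg at h
    have hn : (0:ℝ) < ‖Δhat‖ := lt_of_lt_of_le hr h
    set t := r / ‖Δhat‖ with ht
    have ht0 : 0 ≤ t := div_nonneg hr.le (norm_nonneg _)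
    have ht1 : t ≤ 1 := div_le_one_of_le₀ h (norm_nonneg _)
    have hnorm : ‖t • Δhat‖ = r := by
      rw [norm_smul, Real.norm_eq_abs, abs_of_nonneg ht0, ht,
        div_mul_cancel₀ _ (ne_of_gt hn)]
    have h1 := hpos _ hnorm
    have h2 := hsub Δhat t ⟨ht0, ht1⟩
    have h3 : t * G Δhat ≤ 0 := mul_nonpos_of_nonneg_of_nonpos ht0 hΔ
    linarith
  exact ⟨hlt, hlt.le⟩
end

section
/- In the setting of the forward step with selected coordinate j* and step α* ≠ 0 achieving decrease δ > 0, under RSC with κ_l and RSS with κ_u on the line θ^{(k-1)} + α e_{j*}: the gradient satisfies sign(∇_{j*}L(θ^{(k-1)})) = −sign(α*) and κ_l|α*| ≤ |∇_{j*}L(θ^{(k-1)})| ≤ κ_u|α*|. -/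
/-!
At the minimizer `α*` the quadratic upper bound forces `g α* = 0`, since
`t ↦ g α* · t + (κᵤ/2) t²` is nonnegative everywhere. Adding the quadratic
bounds at `0` and at `α*` to each other gives
`κₗ α*² ≤ (g α* - g 0) α* ≤ κᵤ α*²`, i.e. `κₗ α*² ≤ -g 0 · α* ≤ κᵤ α*²`,
and dividing by `|α*|` gives the claim.
-/

def HasQuadraticLowerBound (φ g : ℝ → ℝ) (κ : ℝ) : Prop :=
  ∀ a b : ℝ, φ a + g a * (b - a) + (κ / 2) * (b - a) ^ 2 ≤ φ b

def HasQuadraticUpperBound (φ g : ℝ → ℝ) (κ : ℝ) : Prop :=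
  ∀ a b : ℝ, φ b ≤ φ a + g a * (b - a) + (κ / 2) * (b - a) ^ 2

variable {φ g : ℝ → ℝ} {κ : ℝ}

theorem HasQuadraticLowerBound.mul_sq_le_sub_mul_sub (h : HasQuadraticLowerBound φ g κ)
    (a b : ℝ) : κ * (b - a) ^ 2 ≤ (g b - g a) * (b - a) := by
  linarith [h a b, h b a]

theorem HasQuadraticUpperBound.sub_mul_sub_le_mul_sq (h : HasQuadraticUpperBound φ g κ)
    (a b : ℝ) : (g b - g a) * (b - a) ≤ κ * (b - a) ^ 2 := by
  linarith [h a b, h b a]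

theorem HasQuadraticUpperBound.eq_zero_of_forall_le (h : HasQuadraticUpperBound φ g κ) {x : ℝ}
    (hmin : ∀ y, φ x ≤ φ y) : g x = 0 := by
  have hquad : ∀ t : ℝ, 0 ≤ κ / 2 * (t * t) + g x * t + 0 := fun t => by
    linarith [h x (x + t), hmin (x + t)]
  have hsq : g x ^ 2 ≤ 0 := by simpa [discrim] using discrim_le_zero hquad
  exact pow_eq_zero_iff two_ne_zero |>.mp (le_antisymm hsq (sq_nonneg _))

theorem forward_step_gradient_comparison_general (φ g : ℝ → ℝ) (κl κu αstar : ℝ)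
    (hκl : 0 < κl) (hαstar : αstar ≠ 0)
    (hRSC : ∀ a b : ℝ, φ b ≥ φ a + g a * (b - a) + (κl / 2) * (b - a) ^ 2)
    (hRSS : ∀ a b : ℝ, φ b ≤ φ a + g a * (b - a) + (κu / 2) * (b - a) ^ 2)
    (hmin : ∀ α : ℝ, φ αstar ≤ φ α) :
    g 0 * αstar < 0 ∧ κl * |αstar| ≤ |g 0| ∧ |g 0| ≤ κu * |αstar| := by
  have hRSC : HasQuadraticLowerBound φ g κl := hRSC
  have hRSS : HasQuadraticUpperBound φ g κu := hRSS
  have hstat : g αstar = 0 := hRSS.eq_zero_of_forall_le hmin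
  have hlower := hRSC.mul_sq_le_sub_mul_sub 0 αstar
  have hupper := hRSS.sub_mul_sub_le_mul_sq 0 αstar
  simp only [hstat, sub_zero, zero_sub, neg_mul] at hlower hupper
  have hneg : g 0 * αstar < 0 := by
    have : 0 < κl * αstar ^ 2 := by positivity
    linarith
  have habs : |g 0| * |αstar| = -(g 0 * αstar) := by
    rw [← abs_mul, abs_of_neg hneg]
  have hα : 0 < |αstar| := abs_pos.mpr hαstar
  rw [← sq_abs] at hlower hupper
  refine ⟨hneg, ?_, ?_⟩
  · exact le_of_mul_le_mul_right (by rw [habs, mul_assoc, ← sq]; exact hlower) hα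
  · exact le_of_mul_le_mul_right (by rw [habs, mul_assoc, ← sq]; exact hupper) hα

/-- Gradient–step-size comparison for the forward step: along the selected
coordinate, with `φ(α) = L(θ^{(k-1)} + α e_{j*})` satisfying RSC with `κₗ` and RSS
with `κᵤ` (derivative `g`), if `α* ≠ 0` minimizes `φ` and achieves decrease
`δ = φ(0) − φ(α*) > 0`, then the gradient at `0` has sign opposite to `α*` and
`κₗ|α*| ≤ |g(0)| ≤ κᵤ|α*|`. -/
theorem forward_step_gradient_comparison (φ g : ℝ → ℝ) (κl κu αstar δ : ℝ)
    (hκl : 0 < κl) (hκlu : κl ≤ κu) (hαstar : αstar ≠ 0)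
    (hRSC : ∀ a b : ℝ, φ b ≥ φ a + g a * (b - a) + (κl / 2) * (b - a) ^ 2)
    (hRSS : ∀ a b : ℝ, φ b ≤ φ a + g a * (b - a) + (κu / 2) * (b - a) ^ 2)
    (hmin : ∀ α : ℝ, φ αstar ≤ φ α)
    (hδ : δ = φ 0 - φ αstar) (hδpos : 0 < δ) :
    g 0 * αstar < 0 ∧ κl * |αstar| ≤ |g 0| ∧ |g 0| ≤ κu * |αstar| :=
  forward_step_gradient_comparison_general φ g κl κu αstar hκl hαstar hRSC hRSS hmin
end
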